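/- A term of the form f_1...f_n g_1...g_m(e) with f_n = ∃, f_1,...,f_{n-1} ∈ {p,s,¬,∃,I}, and g_1,...,g_m ∈ {p,s,¬}, is satisfiable if and only if either the number of negations in f_1...f_{n-1} is even, or both g_1...g_m and f_1...f_{n-1} contain an odd number of negations. -/

import Mathlib

/-!
Every operator other than `¬` maps the full relation to a full one and the empty relation to an
empty one (over a nonempty domain), while `¬` exchanges them; so once a relation is full or empty,
only the parity of the negations applied afterwards matters. Both `p` and `s` act on binary
relations as the transposition, which fixes `e` and its complement, so `g₁…g_m(e)` is `e` or `¬e`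
according to the parity of its negations. Finally `∃ e` is full, and `∃ ¬e` is full exactly when
the domain has two elements, so the remaining case is decided by choosing a singleton or a
two-element model.
-/

/-- The unary operators of the algebra. -/
inductive Op : Type
  | p | s | i | neg | ex
deriving DecidableEq

/-- Permutation of `Fin n` swapping the last two coordinates (identity for `n ≤ 1`). -/
def swapLast (n : ℕ) : Equiv.Perm (Fin n) :=
  if h : 2 ≤ n then Equiv.swap ⟨n - 1, by omega⟩ ⟨n - 2, by omega⟩ else 1

/-- Action of an operator on a relation (of some arity `n`) over `A`:
`p` moves the last coordinate to the front, `s` swaps the last two coordinates,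
`neg` complements within `A^n`, `ex` projects away the last coordinate, and `i`
keeps tuples with equal last two coordinates and drops the last one; `p`, `s`,
`i` are the identity on arity `≤ 1` and `ex` the identity on arity `0`. -/
def applyOp (A : Type) : Op → (Σ n, Set (Fin n → A)) → (Σ n, Set (Fin n → A))
  | Op.p, ⟨n, R⟩ => ⟨n, {t | t ∘ (finRotate n) ∈ R}⟩
  | Op.s, ⟨n, R⟩ => ⟨n, {t | t ∘ (swapLast n) ∈ R}⟩
  | Op.neg, ⟨n, R⟩ => ⟨n, Rᶜ⟩
  | Op.ex, ⟨0, R⟩ => ⟨0, R⟩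
  | Op.ex, ⟨m + 1, R⟩ => ⟨m, {t | ∃ a : A, Fin.snoc t a ∈ R}⟩
  | Op.i, ⟨0, R⟩ => ⟨0, R⟩
  | Op.i, ⟨1, R⟩ => ⟨1, R⟩
  | Op.i, ⟨m + 2, R⟩ => ⟨m + 1, {t | Fin.snoc t (t (Fin.last m)) ∈ R}⟩

/-- Interpretation of a string of operators (head outermost) applied to a base
`k`-ary relation. -/
def interpOps (A : Type) (k : ℕ) (base : Set (Fin k → A)) :
    List Op → Σ n, Set (Fin n → A)
  | [] => ⟨k, base⟩
  | op :: ops => applyOp A op (interpOps A k base ops)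

/-- The binary identity relation `e` over `M`. -/
def eRel (M : Type) : Set (Fin 2 → M) := {t | t 0 = t 1}

lemma interpOps_eq_foldr (A : Type) (k : ℕ) (base : Set (Fin k → A)) (l : List Op) :
    interpOps A k base l = l.foldr (applyOp A) ⟨k, base⟩ := by
  induction l with
  | nil => rfl
  | cons op ops ih => rw [List.foldr_cons, ← ih]; rfl

lemma interpOps_append (A : Type) (k : ℕ) (base : Set (Fin k → A)) (l₁ l₂ : List Op) :
    interpOps A k base (l₁ ++ l₂) = l₁.foldr (applyOp A) (interpOps A k base l₂) := by
  rw [interpOps_eq_foldr, interpOps_eq_foldr, List.foldr_append]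

section ConstRel

variable {A : Type}

def IsConstRel (S : Σ n, Set (Fin n → A)) (P : Prop) : Prop :=
  ∀ t, t ∈ S.2 ↔ P

lemma IsConstRel.nonempty_iff [Nonempty A] {S : Σ n, Set (Fin n → A)} {P : Prop}
    (h : IsConstRel S P) : S.2.Nonempty ↔ P :=
  ⟨fun ⟨t, ht⟩ => (h t).1 ht, fun hP => ⟨Classical.arbitrary _, (h _).2 hP⟩⟩

lemma IsConstRel.applyOp_neg {S : Σ n, Set (Fin n → A)} {P : Prop} (h : IsConstRel S P) :
    IsConstRel (applyOp A Op.neg S) (¬P) := by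
  obtain ⟨n, R⟩ := S
  exact fun t => not_congr (h t)

lemma IsConstRel.applyOp_of_ne_neg [Nonempty A] {S : Σ n, Set (Fin n → A)} {P : Prop}
    (h : IsConstRel S P) {op : Op} (hop : op ≠ Op.neg) : IsConstRel (applyOp A op S) P := by
  obtain ⟨n, R⟩ := S
  cases op with
  | neg => exact absurd rfl hop
  | p => exact fun t => h _
  | s => exact fun t => h _
  | ex =>
    rcases n with _ | m
    · exact h
    · exact fun t => (exists_congr fun a => h (Fin.snoc t a)).trans (exists_const A)
  | i =>
    rcases n with _ | _ | m
    · exact h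
    · exact h
    · exact fun t => h _

lemma IsConstRel.foldr_applyOp [Nonempty A] {S : Σ n, Set (Fin n → A)} {P : Prop}
    (h : IsConstRel S P) (l : List Op) :
    IsConstRel (l.foldr (applyOp A) S) (Even (l.count Op.neg) ↔ P) := by
  induction l with
  | nil => simpa using h
  | cons op l ih =>
    by_cases hop : op = Op.neg
    · subst hop
      simpa [Nat.even_add_one, not_iff] using ih.applyOp_neg
    · simpa [List.count_cons, hop] using ih.applyOp_of_ne_neg hop

end ConstRel

section Binary

variable {M : Type}

lemma finRotate_two : finRotate 2 = Equiv.swap 0 1 := by decide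

lemma swapLast_two : swapLast 2 = Equiv.swap 0 1 := by decide

def diagIff (M : Type) (Q : Prop) : Set (Fin 2 → M) := {t | t 0 = t 1 ↔ Q}

lemma comp_swap_mem_diagIff (Q : Prop) (t : Fin 2 → M) :
    t ∘ Equiv.swap 0 1 ∈ diagIff M Q ↔ t ∈ diagIff M Q := by
  simp [diagIff, eq_comm]

lemma applyOp_diagIff (op : Op) (hop : op = Op.p ∨ op = Op.s ∨ op = Op.neg) (Q : Prop) :
    applyOp M op ⟨2, diagIff M Q⟩ = ⟨2, diagIff M (op = Op.neg ↔ ¬Q)⟩ := by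
  rcases hop with rfl | rfl | rfl <;> refine congrArg (Sigma.mk 2) (Set.ext fun t => ?_)
  · simp [finRotate_two, comp_swap_mem_diagIff]
  · simp [swapLast_two, comp_swap_mem_diagIff]
  · change ¬(t 0 = t 1 ↔ Q) ↔ (t 0 = t 1 ↔ (Op.neg = Op.neg ↔ ¬Q))
    tauto

lemma interpOps_eRel (gs : List Op) (hgs : ∀ g ∈ gs, g = Op.p ∨ g = Op.s ∨ g = Op.neg) :
    interpOps M 2 (eRel M) gs = ⟨2, diagIff M (Even (gs.count Op.neg))⟩ := by
  induction gs with
  | nil => simp [interpOps, eRel, diagIff]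
  | cons g gs ih =>
    have hg := hgs g List.mem_cons_self
    rw [interpOps, ih fun g' hg' => hgs g' (List.mem_cons_of_mem g hg'), applyOp_diagIff g hg]
    by_cases h : g = Op.neg
    · simp [h, Nat.even_add_one]
    · simp [h]

lemma isConstRel_applyOp_ex_diagIff (Q : Prop) :
    IsConstRel (applyOp M Op.ex ⟨2, diagIff M Q⟩) (Q ∨ Nontrivial M) := by
  intro (t : Fin 1 → M)
  change (∃ a, (t 0 = a ↔ Q)) ↔ _
  constructor
  · rintro ⟨a, ha⟩
    by_cases hQ : Q
    · exact Or.inl hQ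
    · exact Or.inr (nontrivial_of_ne _ _ (mt ha.1 hQ))
  · intro h
    by_cases hQ : Q
    · exact ⟨t 0, iff_of_true rfl hQ⟩
    · have : Nontrivial M := h.resolve_left hQ
      obtain ⟨a, ha⟩ := exists_ne (t 0)
      exact ⟨a, iff_of_false ha.symm hQ⟩

end Binary

/-- A term `f₁…f_{n-1} ∃ g₁…g_m(e)` with `g₁,…,g_m ∈ {p,s,¬}` is satisfiable
iff either the number of negations among `f₁,…,f_{n-1}` is even, or both
`g₁…g_m` and `f₁…f_{n-1}` contain an odd number of negations. -/
theorem sat_of_ex_term (fs gs : List Op)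
    (hgs : ∀ g ∈ gs, g = Op.p ∨ g = Op.s ∨ g = Op.neg) :
    (∃ (M : Type), Nonempty M ∧
        (interpOps M 2 (eRel M) (fs ++ Op.ex :: gs)).2.Nonempty) ↔
      (Even (fs.count Op.neg) ∨
        (Odd (gs.count Op.neg) ∧ Odd (fs.count Op.neg))) := by
  have key : ∀ (M : Type) [Nonempty M],
      (interpOps M 2 (eRel M) (fs ++ Op.ex :: gs)).2.Nonempty ↔
        (Even (fs.count Op.neg) ↔ Even (gs.count Op.neg) ∨ Nontrivial M) := fun M _ => by
    rw [interpOps_append, interpOps, interpOps_eRel gs hgs]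
    exact ((isConstRel_applyOp_ex_diagIff _).foldr_applyOp fs).nonempty_iff
  constructor
  · rintro ⟨M, _, hsat⟩
    rw [key] at hsat
    rw [← Nat.not_even_iff_odd, ← Nat.not_even_iff_odd]
    tauto
  · rintro (hf | ⟨hg, hf⟩)
    · exact ⟨Bool, inferInstance, (key Bool).2 (iff_of_true hf (Or.inr inferInstance))⟩
    · refine ⟨Unit, inferInstance, (key Unit).2 (iff_of_false ?_ ?_)⟩
      · exact Nat.not_even_iff_odd.2 hf
      · simp [Nat.not_even_iff_odd.2 hg, not_nontrivial]
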